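/- For every integer d ≥ 2 and all real numbers t > 0 and γ > 0, the d-th moment of the typical I-segment length does not exist: with p_d(x) = ∫₀ᵗ γ·s·e^{−γ·s·x} · (d·s^{d−1}/t^d) ds, the function x ↦ x^d·p_d(x) is not integrable on (0,∞). -/

import Mathlib

open MeasureTheory Real Set

/-!
For `x ≥ 1 / (γ t)` the exponential `e^{-γ s x}` is at least `e⁻¹` on `s ∈ [0, 1 / (γ x)] ⊆ [0, t]`,
so `p_d(x) ≥ C x^{-(d+1)}` with `C > 0`. Hence `x^d p_d(x) ≥ C / x` on a neighbourhood of `∞`,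
and `1 / x` is not integrable there.
-/

theorem not_integrableOn_Ioi_of_const_mul_inv_le {f : ℝ → ℝ} {a c : ℝ} (ha : 0 ≤ a) (hc : 0 < c)
    (hf : ∀ x ∈ Ioi a, c * x⁻¹ ≤ f x) : ¬IntegrableOn f (Ioi a) := by
  intro hint
  have hbound : IntegrableOn (fun x => c * x⁻¹) (Ioi a) := by
    refine hint.mono' (by fun_prop) ((ae_restrict_iff' measurableSet_Ioi).mpr ?_)
    filter_upwards with x hx
    have hx0 : 0 < x := ha.trans_lt hx
    rw [norm_of_nonneg (by positivity)]
    exact hf x hx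
  exact not_integrableOn_Ioi_inv
    ((integrable_const_mul_iff (isUnit_iff_ne_zero.mpr hc.ne') _).mp hbound)

theorem exp_neg_one_mul_inv_pow_le_integral_pow_mul_exp (n : ℕ) {c t : ℝ} (hc : 0 < c)
    (hct : c⁻¹ ≤ t) :
    exp (-1) * (c⁻¹ ^ (n + 1) / (n + 1)) ≤ ∫ s in (0 : ℝ)..t, s ^ n * exp (-(c * s)) := by
  have hcont : Continuous fun s : ℝ => s ^ n * exp (-(c * s)) := by fun_prop
  calc exp (-1) * (c⁻¹ ^ (n + 1) / (n + 1))
      = ∫ s in (0 : ℝ)..c⁻¹, s ^ n * exp (-1) := by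
        rw [intervalIntegral.integral_mul_const, integral_pow, zero_pow n.succ_ne_zero, sub_zero]
        ring
    _ ≤ ∫ s in (0 : ℝ)..c⁻¹, s ^ n * exp (-(c * s)) := by
        refine intervalIntegral.integral_mono_on (by positivity) (by simp)
          (hcont.intervalIntegrable _ _) fun s hs => ?_
        have hcs : c * s ≤ 1 :=
          (mul_le_mul_of_nonneg_left hs.2 hc.le).trans_eq (mul_inv_cancel₀ hc.ne')
        gcongr
        exact pow_nonneg hs.1 n
    _ ≤ ∫ s in (0 : ℝ)..t, s ^ n * exp (-(c * s)) := by
        refine intervalIntegral.integral_mono_interval le_rfl (by positivity) hct ?_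
          (hcont.intervalIntegrable _ _)
        filter_upwards [ae_restrict_mem measurableSet_Ioc] with s hs
        exact mul_nonneg (pow_nonneg hs.1.le n) (exp_pos _).le

/-- The density `p_d` of the length of the typical I-segment of a STIT tessellation at time `t`. -/
noncomputable def isegmentLengthDensity (d : ℕ) (t γ x : ℝ) : ℝ :=
  ∫ s in (0 : ℝ)..t, γ * s * exp (-(γ * s * x)) * (d * s ^ (d - 1) / t ^ d)

theorem isegmentLengthDensity_eq (d : ℕ) (hd : 1 ≤ d) (t γ x : ℝ) :
    isegmentLengthDensity d t γ x
      = γ * d / t ^ d * ∫ s in (0 : ℝ)..t, s ^ d * exp (-(γ * x * s)) := by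
  rw [isegmentLengthDensity, ← intervalIntegral.integral_const_mul]
  congr 1 with s
  obtain ⟨k, rfl⟩ := Nat.exists_eq_add_of_le' hd
  simp only [Nat.add_sub_cancel]
  ring_nf

theorem const_mul_inv_pow_le_isegmentLengthDensity (d : ℕ) (hd : 1 ≤ d) {t γ x : ℝ}
    (hγ : 0 < γ) (hx : 0 < x) (hxt : (γ * x)⁻¹ ≤ t) :
    d * exp (-1) / ((γ * t) ^ d * (d + 1)) * (x ^ (d + 1))⁻¹
      ≤ isegmentLengthDensity d t γ x := by
  have ht : 0 < t := (inv_pos.mpr (mul_pos hγ hx)).trans_le hxt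
  rw [isegmentLengthDensity_eq d hd]
  calc d * exp (-1) / ((γ * t) ^ d * (d + 1)) * (x ^ (d + 1))⁻¹
      = γ * d / t ^ d * (exp (-1) * ((γ * x)⁻¹ ^ (d + 1) / (d + 1))) := by
        rw [inv_pow, mul_pow, mul_pow]
        field_simp
        ring
    _ ≤ _ := by
        gcongr
        exact exp_neg_one_mul_inv_pow_le_integral_pow_mul_exp d (mul_pos hγ hx) hxt

/-- The `d`-th moment of the typical I-segment length does not exist:
`x ↦ x^d · p_d(x)` is not integrable on `(0, ∞)`. -/
theorem stit_Isegment_dth_moment_not_integrable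
    (d : ℕ) (hd : 2 ≤ d) (t γ : ℝ) (ht : 0 < t) (hγ : 0 < γ) :
    ¬ MeasureTheory.IntegrableOn
      (fun x : ℝ => x ^ d *
        ∫ s in (0:ℝ)..t, γ * s * Real.exp (-(γ * s * x)) * (d * s ^ (d - 1) / t ^ d))
      (Set.Ioi 0) := by
  set C : ℝ := d * exp (-1) / ((γ * t) ^ d * (d + 1))
  have hC : 0 < C := by positivity
  have htail : ∀ x ∈ Ioi (γ * t)⁻¹, C * x⁻¹ ≤ x ^ d * isegmentLengthDensity d t γ x := by
    intro x hx
    have hx0 : 0 < x := (inv_pos.mpr (mul_pos hγ ht)).trans hx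
    have hxt : (γ * x)⁻¹ ≤ t := by
      rw [inv_le_comm₀ (mul_pos hγ hx0) ht, ← div_le_iff₀' hγ, div_eq_inv_mul, ← mul_inv]
      exact hx.le
    calc C * x⁻¹ = x ^ d * (C * (x ^ (d + 1))⁻¹) := by
          field_simp
          ring
      _ ≤ x ^ d * isegmentLengthDensity d t γ x := by
          gcongr
          exact const_mul_inv_pow_le_isegmentLengthDensity d (by omega) hγ hx0 hxt
  exact fun h => not_integrableOn_Ioi_of_const_mul_inv_le (by positivity) hC htail
    (h.mono_set (Ioi_subset_Ioi (by positivity)))
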